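/- Let U ⊆ ℝ² be open, let A : U → Sym₂(ℝ) be a twice continuously differentiable field of symmetric 2×2 matrices, and let p : U → ℝ be three times continuously differentiable. Set 𝐄 = 2∇²p·A·∇p and w = tr(A·∇²p). Then on U: div(A𝐄) = −4·det(A)·det(∇²p) + 2·div(w·A·∇p) + 2·⟨[[−∂₂₂p, ∂₁₂p],[∂₁₂p, −∂₁₁p]]·∇p, ∇(det A)⟩. -/

import Mathlib

open Matrix

/-- Partial derivative in the `i`-th coordinate direction. -/
noncomputable def pd (i : Fin 2) (f : (Fin 2 → ℝ) → ℝ) (x : Fin 2 → ℝ) : ℝ :=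
  fderiv ℝ f x (Pi.single i 1)

/-- Gradient of a scalar function on `ℝ²`. -/
noncomputable def grad (f : (Fin 2 → ℝ) → ℝ) (x : Fin 2 → ℝ) : Fin 2 → ℝ :=
  fun i => pd i f x

/-- Divergence of a vector field on `ℝ²`. -/
noncomputable def divg (F : (Fin 2 → ℝ) → Fin 2 → ℝ) (x : Fin 2 → ℝ) : ℝ :=
  ∑ i, pd i (fun y => F y i) x

/-- Hessian matrix of a scalar function on `ℝ²`. -/
noncomputable def hess (p : (Fin 2 → ℝ) → ℝ) (x : Fin 2 → ℝ) : Matrix (Fin 2) (Fin 2) ℝ :=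
  Matrix.of fun i j => pd i (fun y => pd j p y) x

/-!
Expanding `div(A𝐄)`, `div(w A ∇p)` and `∇(det A)` by the Leibniz rule (and Jacobi's formula for
the determinant) writes both sides at a point as polynomials in `A, ∂ᵢA, ∇²p, ∂ᵢ∇²p, ∇p`. They
agree as polynomials once the second and third derivatives of `p` are identified by symmetry of
mixed partials, which holds for `p ∈ C³`.
-/

open Filter Topology

section PartialDerivatives

variable {i : Fin 2} {f g : (Fin 2 → ℝ) → ℝ} {x : Fin 2 → ℝ}

theorem pd_congr_of_eventuallyEq (h : f =ᶠ[𝓝 x] g) : pd i f x = pd i g x := by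
  rw [pd, pd, h.fderiv_eq]

theorem pd_mul (hf : DifferentiableAt ℝ f x) (hg : DifferentiableAt ℝ g x) :
    pd i (fun y => f y * g y) x = pd i f x * g x + f x * pd i g x := by
  simp [pd, fderiv_fun_mul hf hg, mul_comm, add_comm]

theorem pd_const_mul (c : ℝ) (hf : DifferentiableAt ℝ f x) :
    pd i (fun y => c * f y) x = c * pd i f x := by
  simp [pd, fderiv_const_mul hf c]

theorem pd_sub (hf : DifferentiableAt ℝ f x) (hg : DifferentiableAt ℝ g x) :
    pd i (fun y => f y - g y) x = pd i f x - pd i g x := by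
  simp [pd, fderiv_fun_sub hf hg]

theorem pd_sum {ι : Type*} (s : Finset ι) {F : ι → (Fin 2 → ℝ) → ℝ}
    (hF : ∀ k ∈ s, DifferentiableAt ℝ (F k) x) :
    pd i (fun y => ∑ k ∈ s, F k y) x = ∑ k ∈ s, pd i (F k) x := by
  simp [pd, fderiv_fun_sum hF]

theorem ContDiffAt.pd {n : WithTop ℕ∞} (hf : ContDiffAt ℝ (n + 1) f x) (i : Fin 2) :
    ContDiffAt ℝ n (pd i f) x :=
  (hf.fderiv_right le_rfl).clm_apply contDiffAt_const

theorem pd_pd_comm (hf : ContDiffAt ℝ 2 f x) (i j : Fin 2) :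
    pd i (fun y => pd j f y) x = pd j (fun y => pd i f y) x := by
  have hd : DifferentiableAt ℝ (fderiv ℝ f) x :=
    (hf.fderiv_right (m := 1) (by norm_num)).differentiableAt one_ne_zero
  have second : ∀ u v : Fin 2 → ℝ,
      fderiv ℝ (fun y => fderiv ℝ f y v) x u = fderiv ℝ (fderiv ℝ f) x u v := fun u v => by
    rw [fderiv_clm_apply hd (differentiableAt_const v)]
    simp
  simp only [pd, second]
  exact hf.isSymmSndFDerivAt (by simp) _ _

end PartialDerivatives

section FieldDerivatives

variable {m n : Type*} {i : Fin 2} {x : Fin 2 → ℝ}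

noncomputable def pdVec (i : Fin 2) (v : (Fin 2 → ℝ) → n → ℝ) (x : Fin 2 → ℝ) : n → ℝ :=
  fun k => pd i (fun y => v y k) x

noncomputable def pdMat (i : Fin 2) (M : (Fin 2 → ℝ) → Matrix m n ℝ) (x : Fin 2 → ℝ) :
    Matrix m n ℝ :=
  of fun k l => pd i (fun y => M y k l) x

theorem divg_eq_sum_pdVec (F : (Fin 2 → ℝ) → Fin 2 → ℝ) : divg F x = ∑ i, pdVec i F x i := rfl

theorem pdVec_grad (p : (Fin 2 → ℝ) → ℝ) : pdVec i (fun y => grad p y) x = hess p x i := rfl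

variable {M : (Fin 2 → ℝ) → Matrix m n ℝ} {v : (Fin 2 → ℝ) → n → ℝ} {c : (Fin 2 → ℝ) → ℝ}

theorem differentiableAt_mulVec_apply [Fintype n]
    (hM : ∀ k l, DifferentiableAt ℝ (fun y => M y k l) x)
    (hv : ∀ l, DifferentiableAt ℝ (fun y => v y l) x) (k : m) :
    DifferentiableAt ℝ (fun y => (M y *ᵥ v y) k) x := by
  simp only [mulVec, dotProduct]
  fun_prop

theorem pdVec_mulVec [Fintype n] (hM : ∀ k l, DifferentiableAt ℝ (fun y => M y k l) x)
    (hv : ∀ l, DifferentiableAt ℝ (fun y => v y l) x) :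
    pdVec i (fun y => M y *ᵥ v y) x = pdMat i M x *ᵥ v x + M x *ᵥ pdVec i v x := by
  ext k
  simp only [pdVec, pdMat, mulVec, dotProduct, Pi.add_apply, of_apply]
  rw [pd_sum (F := fun l y => M y k l * v y l) _ fun l _ => (hM k l).mul (hv l),
    ← Finset.sum_add_distrib]
  simp only [pd_mul (hM k _) (hv _)]

theorem pdVec_smul (hc : DifferentiableAt ℝ c x)
    (hv : ∀ l, DifferentiableAt ℝ (fun y => v y l) x) :
    pdVec i (fun y => c y • v y) x = pd i c x • v x + c x • pdVec i v x := by
  ext k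
  exact pd_mul hc (hv k)

theorem pdVec_const_smul (a : ℝ) (hv : ∀ l, DifferentiableAt ℝ (fun y => v y l) x) :
    pdVec i (fun y => a • v y) x = a • pdVec i v x := by
  ext k
  exact pd_const_mul a (hv k)

end FieldDerivatives

section MatrixFields

variable {m n o : Type*} {i : Fin 2} {x : Fin 2 → ℝ}

theorem differentiableAt_mul_apply [Fintype n] {M : (Fin 2 → ℝ) → Matrix m n ℝ}
    {N : (Fin 2 → ℝ) → Matrix n o ℝ} (hM : ∀ k l, DifferentiableAt ℝ (fun y => M y k l) x)
    (hN : ∀ k l, DifferentiableAt ℝ (fun y => N y k l) x) (k : m) (l : o) :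
    DifferentiableAt ℝ (fun y => (M y * N y) k l) x := by
  simp only [mul_apply]
  fun_prop

theorem pdMat_mul [Fintype n] {M : (Fin 2 → ℝ) → Matrix m n ℝ}
    {N : (Fin 2 → ℝ) → Matrix n o ℝ} (hM : ∀ k l, DifferentiableAt ℝ (fun y => M y k l) x)
    (hN : ∀ k l, DifferentiableAt ℝ (fun y => N y k l) x) :
    pdMat i (fun y => M y * N y) x = pdMat i M x * N x + M x * pdMat i N x := by
  ext k l
  simp only [pdMat, mul_apply, Matrix.add_apply, of_apply]
  rw [pd_sum (F := fun j y => M y k j * N y j l) _ fun j _ => (hM k j).mul (hN j l),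
    ← Finset.sum_add_distrib]
  simp only [pd_mul (hM k _) (hN _ l)]

variable {M : (Fin 2 → ℝ) → Matrix n n ℝ}

theorem differentiableAt_trace [Fintype n]
    (hM : ∀ k l, DifferentiableAt ℝ (fun y => M y k l) x) :
    DifferentiableAt ℝ (fun y => (M y).trace) x := by
  simp only [trace, diag]
  fun_prop

theorem pd_trace [Fintype n] (hM : ∀ k l, DifferentiableAt ℝ (fun y => M y k l) x) :
    pd i (fun y => (M y).trace) x = (pdMat i M x).trace :=
  pd_sum (F := fun k y => M y k k) _ fun k _ => hM k k

theorem pdMat_isSymm (hM : ∀ᶠ y in 𝓝 x, (M y).IsSymm) : (pdMat i M x).IsSymm := by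
  refine IsSymm.ext fun k l => pd_congr_of_eventuallyEq ?_
  filter_upwards [hM] with y hy using hy.apply k l

end MatrixFields

theorem grad_det_fin_two {M : (Fin 2 → ℝ) → Matrix (Fin 2) (Fin 2) ℝ} {x : Fin 2 → ℝ}
    (hM : ∀ k l, DifferentiableAt ℝ (fun y => M y k l) x) :
    grad (fun y => (M y).det) x = fun i => (adjugate (M x) * pdMat i M x).trace := by
  ext i
  simp only [grad, det_fin_two]
  rw [pd_sub ((hM 0 0).fun_mul (hM 1 1)) ((hM 0 1).fun_mul (hM 1 0)), pd_mul (hM 0 0) (hM 1 1),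
    pd_mul (hM 0 1) (hM 1 0)]
  simp [adjugate_fin_two, trace, pdMat, vecHead, vecTail]
  ring

section Hessian

variable {p : (Fin 2 → ℝ) → ℝ} {x : Fin 2 → ℝ}

theorem differentiableAt_grad_apply (hp : ContDiffAt ℝ 2 p x) (k : Fin 2) :
    DifferentiableAt ℝ (fun y => grad p y k) x :=
  (hp.pd (n := 1) k).differentiableAt one_ne_zero

theorem differentiableAt_hess_apply (hp : ContDiffAt ℝ 3 p x) (k l : Fin 2) :
    DifferentiableAt ℝ (fun y => hess p y k l) x :=
  (((hp.pd (n := 2) l).pd (n := 1) k)).differentiableAt one_ne_zero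

theorem hess_isSymm (hp : ContDiffAt ℝ 2 p x) : (hess p x).IsSymm :=
  IsSymm.ext fun k l => pd_pd_comm hp l k

theorem pdMat_hess_comm (hp : ContDiffAt ℝ 3 p x) (i j : Fin 2) :
    pdMat i (hess p) x j = pdMat j (hess p) x i := by
  ext l
  exact pd_pd_comm (hp.pd (n := 2) l) i j

theorem pdMat_hess_isSymm (hp : ContDiffAt ℝ 3 p x) (i : Fin 2) : (pdMat i (hess p) x).IsSymm :=
  pdMat_isSymm <| (hp.eventually (by simp)).mono fun _ hy => hess_isSymm (hy.of_le (by norm_num))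

end Hessian

/-- `a, a' i, h, h' i, g` stand for `A, ∂ᵢA, ∇²p, ∂ᵢ∇²p, ∇p` at a point, so both sums are the
Leibniz expansions of the two divergences. Full symmetry of the third derivatives `h'` is what
makes the rows of the cofactor matrix of `∇²p` divergence free. -/
theorem divg_identity_of_jets (a h : Matrix (Fin 2) (Fin 2) ℝ)
    (a' h' : Fin 2 → Matrix (Fin 2) (Fin 2) ℝ) (g : Fin 2 → ℝ) (hh : h.IsSymm)
    (hh' : ∀ i, (h' i).IsSymm) (hh'_comm : ∀ i j, h' i j = h' j i) :
    ∑ i, (a' i *ᵥ (2 : ℝ) • h *ᵥ a *ᵥ g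
        + a *ᵥ (2 : ℝ) • (h' i *ᵥ a *ᵥ g + h *ᵥ (a' i *ᵥ g + a *ᵥ h i))) i =
      -4 * a.det * h.det
        + 2 * ∑ i, ((a' i * h + a * h' i).trace • a *ᵥ g
            + (a * h).trace • (a' i *ᵥ g + a *ᵥ h i)) i
        + 2 * (!![-h 1 1, h 0 1; h 0 1, -h 0 0] *ᵥ g ⬝ᵥ fun i => (adjugate a * a' i).trace) := by
  have h100 : h' 1 0 0 = h' 0 0 1 := (congrFun (hh'_comm 1 0) 0).trans ((hh' 0).apply 0 1)
  have h110 : h' 1 1 0 = h' 0 1 1 := ((hh' 1).apply 0 1).trans (congrFun (hh'_comm 1 0) 1)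
  simp only [Fin.sum_univ_two, mulVec, dotProduct, trace, diag, mul_apply, det_fin_two,
    adjugate_fin_two, Pi.add_apply, Pi.smul_apply, smul_eq_mul, of_apply, cons_val', cons_val_zero,
    cons_val_one, empty_val', cons_val_fin_one, Matrix.add_apply]
  rw [hh.apply 0 1, h100, h110]
  ring

theorem stmt10_general (U : Set (Fin 2 → ℝ)) (hU : IsOpen U)
    (A : (Fin 2 → ℝ) → Matrix (Fin 2) (Fin 2) ℝ)
    (hA : ∀ i j, ContDiffOn ℝ 2 (fun x => A x i j) U)
    (p : (Fin 2 → ℝ) → ℝ) (hp : ContDiffOn ℝ 3 p U)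
    (E : (Fin 2 → ℝ) → Fin 2 → ℝ)
    (hE : E = fun y => (2 : ℝ) • (hess p y).mulVec ((A y).mulVec (grad p y)))
    (w : (Fin 2 → ℝ) → ℝ) (hw : w = fun y => (A y * hess p y).trace)
    (x : Fin 2 → ℝ) (hx : x ∈ U) :
    divg (fun y => (A y).mulVec (E y)) x =
      -4 * (A x).det * (hess p x).det
        + 2 * divg (fun y => w y • (A y).mulVec (grad p y)) x
        + 2 * ((!![-(hess p x 1 1), hess p x 0 1;
                    hess p x 0 1, -(hess p x 0 0)]).mulVec (grad p x)
                ⬝ᵥ grad (fun y => (A y).det) x) := by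
  subst hE hw
  have hUx := hU.mem_nhds hx
  have hp3 : ContDiffAt ℝ 3 p x := hp.contDiffAt hUx
  have dA : ∀ k l, DifferentiableAt ℝ (fun y => A y k l) x := fun k l =>
    ((hA k l).contDiffAt hUx).differentiableAt (by norm_num)
  have dg := differentiableAt_grad_apply (hp3.of_le (by norm_num))
  have dH := differentiableAt_hess_apply hp3
  have dAg := differentiableAt_mulVec_apply dA dg
  have dHAg := differentiableAt_mulVec_apply dH dAg
  have dE : ∀ k, DifferentiableAt ℝ (fun y => ((2 : ℝ) • (hess p y *ᵥ (A y *ᵥ grad p y))) k) x :=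
    fun k => (dHAg k).const_mul 2
  have dAH := differentiableAt_mul_apply dA dH
  have dw := differentiableAt_trace dAH
  simp (disch := assumption) only [divg_eq_sum_pdVec, grad_det_fin_two dA, pdVec_mulVec,
    pdVec_const_smul, pdVec_smul, pdVec_grad, pd_trace, pdMat_mul]
  exact divg_identity_of_jets _ _ _ _ _ (hess_isSymm (hp3.of_le (by norm_num)))
    (pdMat_hess_isSymm hp3) (pdMat_hess_comm hp3)

/-- The identity
`div(A𝐄) = −4 det(A) det(∇²p) + 2 div(w A ∇p)
  + 2 ⟨[[−∂₂₂p, ∂₁₂p],[∂₁₂p, −∂₁₁p]]·∇p, ∇(det A)⟩`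
for `𝐄 = 2∇²p·A·∇p` and `w = tr(A·∇²p)`. -/
theorem stmt10 (U : Set (Fin 2 → ℝ)) (hU : IsOpen U)
    (A : (Fin 2 → ℝ) → Matrix (Fin 2) (Fin 2) ℝ)
    (hAsymm : ∀ x ∈ U, (A x).IsSymm)
    (hA : ∀ i j, ContDiffOn ℝ 2 (fun x => A x i j) U)
    (p : (Fin 2 → ℝ) → ℝ) (hp : ContDiffOn ℝ 3 p U)
    (E : (Fin 2 → ℝ) → Fin 2 → ℝ)
    (hE : E = fun y => (2 : ℝ) • (hess p y).mulVec ((A y).mulVec (grad p y)))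
    (w : (Fin 2 → ℝ) → ℝ) (hw : w = fun y => (A y * hess p y).trace)
    (x : Fin 2 → ℝ) (hx : x ∈ U) :
    divg (fun y => (A y).mulVec (E y)) x =
      -4 * (A x).det * (hess p x).det
        + 2 * divg (fun y => w y • (A y).mulVec (grad p y)) x
        + 2 * ((!![-(hess p x 1 1), hess p x 0 1;
                    hess p x 0 1, -(hess p x 0 0)]).mulVec (grad p x)
                ⬝ᵥ grad (fun y => (A y).det) x) :=
  stmt10_general U hU A hA p hp E hE w hw x hx
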